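/- Let G be a finite simple graph with components S_1, …, S_k (k ≥ 2), let u, v be adjacent vertices in S_j lying on a common cycle, and let w, x be adjacent vertices in S_i (i ≠ j). Then the graph G' obtained from G by deleting edges uv and wx and inserting edges uw and xv has exactly k − 1 components, and every vertex has the same degree in G' as in G. -/
import Mathlib

open SimpleGraph

open scoped Classical in
/-- Let G have exactly k ≥ 2 components, let u, v be adjacent vertices lying on a common
cycle, and let w, x be adjacent vertices of a different component. Then deleting the edges
uv and wx and inserting the edges uw and xv yields a graph with exactly k − 1 components
in which every vertex has the same degree as in G. -/
theorem stmt_16 {V : Type*} [Fintype V] (G : SimpleGraph V) (k : ℕ) (hk : 2 ≤ k)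
    (hcomp : Nat.card G.ConnectedComponent = k)
    (u v w x : V) (huv : G.Adj u v) (hwx : G.Adj w x)
    (hcyc : ∃ c : G.Walk u u, c.IsCycle ∧ s(u, v) ∈ c.edges)
    (hsep : ¬ G.Reachable u w) :
    Nat.card (G \ SimpleGraph.fromEdgeSet {s(u, v), s(w, x)}
        ⊔ SimpleGraph.fromEdgeSet {s(u, w), s(x, v)}).ConnectedComponent = k - 1 ∧
      ∀ z : V, (G \ SimpleGraph.fromEdgeSet {s(u, v), s(w, x)}
        ⊔ SimpleGraph.fromEdgeSet {s(u, w), s(x, v)}).degree z = G.degree z := by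
  classical
  set G' : SimpleGraph V := G \ SimpleGraph.fromEdgeSet {s(u, v), s(w, x)}
      ⊔ SimpleGraph.fromEdgeSet {s(u, w), s(x, v)} with hG'
  -- separation helper
  have hUW : ∀ a b : V, G.Reachable u a → G.Reachable w b → ¬ G.Reachable a b := by
    intro a b ha hb hab
    exact hsep (ha.trans (hab.trans hb.symm))
  have huvne : u ≠ v := huv.ne
  have hwxne : w ≠ x := hwx.ne
  have hnuw : u ≠ w := by rintro rfl; exact hsep (Reachable.refl _)
  have hnux : u ≠ x := by rintro rfl; exact hsep hwx.symm.reachable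
  have hnvw : v ≠ w := by rintro rfl; exact hsep huv.reachable
  have hnvx : v ≠ x := by
    rintro rfl
    exact hsep (huv.reachable.trans hwx.symm.reachable)
  have hnadjuw : ¬ G.Adj u w := fun h => hsep h.reachable
  have hnadjux : ¬ G.Adj u x := fun h => hUW u x (Reachable.refl _) hwx.reachable h.reachable
  have hnadjvw : ¬ G.Adj v w := fun h => hUW v w huv.reachable (Reachable.refl _) h.reachable
  have hnadjvx : ¬ G.Adj v x := fun h => hUW v x huv.reachable hwx.reachable h.reachable
  -- adjacency characterization
  have hadj : ∀ a b : V, G'.Adj a b ↔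
      (G.Adj a b ∧ s(a, b) ≠ s(u, v) ∧ s(a, b) ≠ s(w, x)) ∨
      ((s(a, b) = s(u, w) ∨ s(a, b) = s(x, v)) ∧ a ≠ b) := by
    intro a b
    constructor
    · rintro (⟨hg, hno⟩ | hf)
      · rw [fromEdgeSet_adj] at hno
        simp only [Set.mem_insert_iff, Set.mem_singleton_iff] at hno
        exact Or.inl ⟨hg, fun h => hno ⟨Or.inl h, hg.ne⟩, fun h => hno ⟨Or.inr h, hg.ne⟩⟩
      · rw [fromEdgeSet_adj] at hf
        simp only [Set.mem_insert_iff, Set.mem_singleton_iff] at hf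
        exact Or.inr hf
    · rintro (⟨hg, h1, h2⟩ | ⟨he, hne⟩)
      · left
        refine ⟨hg, ?_⟩
        rw [fromEdgeSet_adj]
        simp only [Set.mem_insert_iff, Set.mem_singleton_iff]
        tauto
      · right
        rw [fromEdgeSet_adj]
        simp only [Set.mem_insert_iff, Set.mem_singleton_iff]
        exact ⟨he, hne⟩
  have hadjuw : G'.Adj u w := (hadj u w).2 (Or.inr ⟨Or.inl rfl, hnuw⟩)
  have hadjxv : G'.Adj x v := (hadj x v).2 (Or.inr ⟨Or.inr rfl, fun h => hnvx h.symm⟩)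
  -- u and v remain connected
  have hdel : (G \ SimpleGraph.fromEdgeSet {s(u, v)}).Reachable u v := by
    obtain ⟨c, hc, hmem⟩ := hcyc
    exact ((SimpleGraph.adj_and_reachable_delete_edges_iff_exists_cycle).2 ⟨u, c, hc, hmem⟩).2
  have hruv : G'.Reachable u v := by
    obtain ⟨p⟩ := hdel
    refine Walk.reachable (p.transfer G' ?_)
    intro e he
    have hsub : (G \ SimpleGraph.fromEdgeSet {s(u, v)}) ≤ G := sdiff_le
    revert he
    induction e with
    | _ a b =>
      intro he
      have hedge := p.edges_subset_edgeSet he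
      rw [mem_edgeSet] at hedge ⊢
      obtain ⟨hg, hno⟩ := hedge
      rw [fromEdgeSet_adj] at hno
      have h1 : s(a, b) ≠ s(u, v) := by
        intro h; exact hno ⟨by simp [h], hg.ne⟩
      have h2 : s(a, b) ≠ s(w, x) := by
        intro h
        have hw : w ∈ p.support := by
          apply Walk.fst_mem_support_of_mem_edges p
          rwa [← h]
        have : (G \ SimpleGraph.fromEdgeSet {s(u, v)}).Reachable u w :=
          Walk.reachable (p.takeUntil w hw)
        exact hsep (this.mono hsub)
      exact (hadj a b).2 (Or.inl ⟨hg, h1, h2⟩)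
  have hrwx : G'.Reachable w x :=
    hadjuw.symm.reachable.trans (hruv.trans hadjxv.symm.reachable)
  -- forward reachability
  have hforward : ∀ a b : V, G.Reachable a b → G'.Reachable a b := by
    intro a b h
    obtain ⟨p⟩ := h
    induction p with
    | nil => exact Reachable.refl _
    | @cons a c b h p ih =>
      refine Reachable.trans ?_ ih
      by_cases h1 : s(a, c) = s(u, v)
      · rw [Sym2.eq_iff] at h1
        rcases h1 with ⟨rfl, rfl⟩ | ⟨rfl, rfl⟩
        · exact hruv
        · exact hruv.symm
      · by_cases h2 : s(a, c) = s(w, x)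
        · rw [Sym2.eq_iff] at h2
          rcases h2 with ⟨rfl, rfl⟩ | ⟨rfl, rfl⟩
          · exact hrwx
          · exact hrwx.symm
        · exact ((hadj a c).2 (Or.inl ⟨h, h1, h2⟩)).reachable
  -- backward reachability analysis
  have hback : ∀ a b : V, G'.Reachable a b → G.Reachable a b ∨
      (G.Reachable a u ∧ G.Reachable w b) ∨ (G.Reachable a w ∧ G.Reachable u b) := by
    intro a b h
    obtain ⟨p⟩ := h
    induction p with
    | nil => exact Or.inl (Reachable.refl _)
    | @cons a c b h p ih =>
      rcases (hadj a c).1 h with ⟨hg, -, -⟩ | ⟨he, hne⟩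
      · rcases ih with h1 | ⟨h1, h2⟩ | ⟨h1, h2⟩
        · exact Or.inl (hg.reachable.trans h1)
        · exact Or.inr (Or.inl ⟨hg.reachable.trans h1, h2⟩)
        · exact Or.inr (Or.inr ⟨hg.reachable.trans h1, h2⟩)
      · rcases he with he | he <;> rw [Sym2.eq_iff] at he <;>
          rcases he with ⟨rfl, rfl⟩ | ⟨rfl, rfl⟩
        · -- a = u, c = w
          rcases ih with h1 | ⟨h1, h2⟩ | ⟨h1, h2⟩
          · exact Or.inr (Or.inl ⟨Reachable.refl _, h1⟩)
          · exact absurd h1.symm hsep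
          · exact Or.inl h2
        · -- a = w, c = u
          rcases ih with h1 | ⟨h1, h2⟩ | ⟨h1, h2⟩
          · exact Or.inr (Or.inr ⟨Reachable.refl _, h1⟩)
          · exact Or.inl h2
          · exact absurd h1 hsep
        · -- a = x, c = v
          rcases ih with h1 | ⟨h1, h2⟩ | ⟨h1, h2⟩
          · exact Or.inr (Or.inr ⟨hwx.symm.reachable, huv.reachable.trans h1⟩)
          · exact Or.inl (hwx.symm.reachable.trans h2)
          · exact absurd (huv.reachable.trans h1) hsep
        · -- a = v, c = x
          rcases ih with h1 | ⟨h1, h2⟩ | ⟨h1, h2⟩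
          · exact Or.inr (Or.inl ⟨huv.symm.reachable, hwx.reachable.trans h1⟩)
          · exact absurd (h1.symm.trans hwx.symm.reachable) hsep
          · exact Or.inl (huv.symm.reachable.trans h2)
  -- the map on components
  let φ : G.ConnectedComponent → G'.ConnectedComponent :=
    ConnectedComponent.lift (fun a => G'.connectedComponentMk a)
      (fun a b p _ => ConnectedComponent.eq.2 (hforward a b ⟨p⟩))
  have hφmk : ∀ a : V, φ (G.connectedComponentMk a) = G'.connectedComponentMk a :=
    fun a => rfl
  have hwne : G.connectedComponentMk u ≠ G.connectedComponentMk w :=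
    fun h => hsep (ConnectedComponent.exact h)
  let f : {c : G.ConnectedComponent // c ≠ G.connectedComponentMk w} →
      G'.ConnectedComponent := fun c => φ c.1
  have hfbij : Function.Bijective f := by
    constructor
    · rintro ⟨c, hc⟩ ⟨c', hc'⟩ hcc
      obtain ⟨a, rfl⟩ := c.exists_rep
      obtain ⟨b, rfl⟩ := c'.exists_rep
      simp only [f, hφmk] at hcc
      have := hback a b (ConnectedComponent.exact hcc)
      rcases this with h1 | ⟨h1, h2⟩ | ⟨h1, h2⟩
      · exact Subtype.ext (ConnectedComponent.sound h1)
      · exact absurd (ConnectedComponent.sound h2.symm) hc'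
      · exact absurd (ConnectedComponent.sound h1) hc
    · intro d
      obtain ⟨a, rfl⟩ := d.exists_rep
      by_cases haw : G.Reachable a w
      · refine ⟨⟨G.connectedComponentMk u, hwne⟩, ?_⟩
        simp only [f, hφmk]
        exact ConnectedComponent.sound (hadjuw.reachable.trans (hforward _ _ haw.symm))
      · exact ⟨⟨G.connectedComponentMk a, fun h => haw (ConnectedComponent.exact h)⟩, rfl⟩
  -- counting
  haveI : Fintype G.ConnectedComponent := Fintype.ofFinite _
  haveI : Fintype G'.ConnectedComponent := Fintype.ofFinite _
  have hcard : Nat.card G'.ConnectedComponent = k - 1 := by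
    have h1 : Nat.card {c : G.ConnectedComponent // c ≠ G.connectedComponentMk w} =
        Nat.card G'.ConnectedComponent := Nat.card_eq_of_bijective f hfbij
    rw [← h1, Nat.card_eq_fintype_card]
    have h2 : Fintype.card {c : G.ConnectedComponent // c ≠ G.connectedComponentMk w} =
        Fintype.card G.ConnectedComponent - 1 := by
      have := Fintype.card_subtype_compl (fun c : G.ConnectedComponent =>
        c = G.connectedComponentMk w)
      rw [Fintype.card_subtype_eq] at this
      exact this
    rw [h2, ← Nat.card_eq_fintype_card, hcomp]
  refine ⟨hcard, ?_⟩
  -- degrees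
  intro z
  by_cases hzu : z = u
  · rw [hzu]
    have hnf : G'.neighborFinset u = insert w ((G.neighborFinset u).erase v) := by
      ext b
      simp only [mem_neighborFinset, Finset.mem_insert, Finset.mem_erase]
      rw [hadj]
      constructor
      · rintro (⟨hg, h1, h2⟩ | ⟨(he | he), hne⟩)
        · refine Or.inr ⟨?_, hg⟩
          rintro rfl; exact h1 rfl
        · rw [Sym2.eq_iff] at he
          rcases he with ⟨-, rfl⟩ | ⟨h, -⟩
          · exact Or.inl rfl
          · exact absurd h hnuw
        · rw [Sym2.eq_iff] at he
          rcases he with ⟨h, -⟩ | ⟨h, -⟩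
          · exact absurd h hnux
          · exact absurd h huvne
      · rintro (rfl | ⟨hbv, hg⟩)
        · exact Or.inr ⟨Or.inl rfl, hnuw⟩
        · refine Or.inl ⟨hg, ?_, ?_⟩ <;> rw [Ne, Sym2.eq_iff] <;> push_neg
          · exact ⟨fun _ => hbv, fun h => absurd h huvne⟩
          · exact ⟨fun h => absurd h hnuw, fun h => absurd h hnux⟩
    rw [degree, degree, hnf, Finset.card_insert_of_notMem, Finset.card_erase_add_one]
    · rwa [mem_neighborFinset]
    · intro hmem
      exact hnadjuw ((mem_neighborFinset _ _ _).1 (Finset.mem_of_mem_erase hmem))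
  · by_cases hzv : z = v
    · rw [hzv]
      have hnf : G'.neighborFinset v = insert x ((G.neighborFinset v).erase u) := by
        ext b
        simp only [mem_neighborFinset, Finset.mem_insert, Finset.mem_erase]
        rw [hadj]
        constructor
        · rintro (⟨hg, h1, h2⟩ | ⟨(he | he), hne⟩)
          · refine Or.inr ⟨?_, hg⟩
            rintro rfl
            exact h1 (Sym2.eq_swap)
          · rw [Sym2.eq_iff] at he
            rcases he with ⟨h, -⟩ | ⟨h, -⟩
            · exact absurd h.symm huvne
            · exact absurd h hnvw
          · rw [Sym2.eq_iff] at he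
            rcases he with ⟨h, -⟩ | ⟨-, rfl⟩
            · exact absurd h hnvx
            · exact Or.inl rfl
        · rintro (rfl | ⟨hbu, hg⟩)
          · exact Or.inr ⟨Or.inr Sym2.eq_swap, hnvx⟩
          · refine Or.inl ⟨hg, ?_, ?_⟩ <;> rw [Ne, Sym2.eq_iff] <;> push_neg
            · exact ⟨fun h => absurd h.symm huvne, fun _ => hbu⟩
            · exact ⟨fun h => absurd h hnvw, fun h => absurd h hnvx⟩
      rw [degree, degree, hnf, Finset.card_insert_of_notMem, Finset.card_erase_add_one]
      · rw [mem_neighborFinset]; exact huv.symm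
      · intro hmem
        exact hnadjvx ((mem_neighborFinset _ _ _).1 (Finset.mem_of_mem_erase hmem))
    · by_cases hzw : z = w
      · rw [hzw]
        have hnf : G'.neighborFinset w = insert u ((G.neighborFinset w).erase x) := by
          ext b
          simp only [mem_neighborFinset, Finset.mem_insert, Finset.mem_erase]
          rw [hadj]
          constructor
          · rintro (⟨hg, h1, h2⟩ | ⟨(he | he), hne⟩)
            · refine Or.inr ⟨?_, hg⟩
              rintro rfl; exact h2 rfl
            · rw [Sym2.eq_iff] at he
              rcases he with ⟨h, -⟩ | ⟨-, rfl⟩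
              · exact absurd h.symm hnuw
              · exact Or.inl rfl
            · rw [Sym2.eq_iff] at he
              rcases he with ⟨h, -⟩ | ⟨h, -⟩
              · exact absurd h hwxne
              · exact absurd h.symm hnvw
          · rintro (rfl | ⟨hbx, hg⟩)
            · exact Or.inr ⟨Or.inl Sym2.eq_swap, fun h => hnuw h.symm⟩
            · refine Or.inl ⟨hg, ?_, ?_⟩ <;> rw [Ne, Sym2.eq_iff] <;> push_neg
              · exact ⟨fun h => absurd h.symm hnuw, fun h => absurd h.symm hnvw⟩
              · exact ⟨fun _ => hbx, fun h => absurd h hwxne⟩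
        rw [degree, degree, hnf, Finset.card_insert_of_notMem, Finset.card_erase_add_one]
        · rwa [mem_neighborFinset]
        · intro hmem
          exact hnadjuw (((mem_neighborFinset _ _ _).1 (Finset.mem_of_mem_erase hmem)).symm)
      · by_cases hzx : z = x
        · rw [hzx]
          have hnf : G'.neighborFinset x = insert v ((G.neighborFinset x).erase w) := by
            ext b
            simp only [mem_neighborFinset, Finset.mem_insert, Finset.mem_erase]
            rw [hadj]
            constructor
            · rintro (⟨hg, h1, h2⟩ | ⟨(he | he), hne⟩)
              · refine Or.inr ⟨?_, hg⟩
                rintro rfl; exact h2 Sym2.eq_swap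
              · rw [Sym2.eq_iff] at he
                rcases he with ⟨h, -⟩ | ⟨h, -⟩
                · exact absurd h.symm hnux
                · exact absurd h.symm hwxne
              · rw [Sym2.eq_iff] at he
                rcases he with ⟨-, rfl⟩ | ⟨h, -⟩
                · exact Or.inl rfl
                · exact absurd h.symm hnvx
            · rintro (rfl | ⟨hbw, hg⟩)
              · exact Or.inr ⟨Or.inr rfl, fun h => hnvx h.symm⟩
              · refine Or.inl ⟨hg, ?_, ?_⟩ <;> rw [Ne, Sym2.eq_iff] <;> push_neg
                · exact ⟨fun h => absurd h.symm hnux, fun h => absurd h.symm hnvx⟩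
                · exact ⟨fun h => absurd h.symm hwxne, fun _ => hbw⟩
          rw [degree, degree, hnf, Finset.card_insert_of_notMem, Finset.card_erase_add_one]
          · rw [mem_neighborFinset]; exact hwx.symm
          · intro hmem
            exact hnadjvx (((mem_neighborFinset _ _ _).1 (Finset.mem_of_mem_erase hmem)).symm)
        · have hnf : G'.neighborFinset z = G.neighborFinset z := by
            ext b
            simp only [mem_neighborFinset]
            rw [hadj]
            constructor
            · rintro (⟨hg, -, -⟩ | ⟨(he | he), hne⟩)
              · exact hg
              · rw [Sym2.eq_iff] at he
                rcases he with ⟨h, -⟩ | ⟨h, -⟩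
                · exact absurd h hzu
                · exact absurd h hzw
              · rw [Sym2.eq_iff] at he
                rcases he with ⟨h, -⟩ | ⟨h, -⟩
                · exact absurd h hzx
                · exact absurd h hzv
            · intro hg
              refine Or.inl ⟨hg, ?_, ?_⟩ <;> rw [Ne, Sym2.eq_iff] <;> push_neg
              · exact ⟨fun h => absurd h hzu, fun h => absurd h hzv⟩
              · exact ⟨fun h => absurd h hzw, fun h => absurd h hzx⟩
          rw [degree, degree, hnf]
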